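/- arXiv:2310.06503 — 4 statements merged into one kernel-verified Lean document; each statement's English description precedes it below -/
import Mathlib

section
/- Define w(x,y) = 2·arctan( sinh(√5·x) / (√5·cosh(y)) ). Then w satisfies the hyperbolic sine-Gordon equation w_xx - w_yy = 2·sin(2w) on the real plane. -/
/-!
Put `u = tan (w / 2) = sinh (√5 x) / (√5 cosh y)`. In each variable the chain rule gives
`w'' = 2 u'' / (1 + u²) - 4 u u'² / (1 + u²)²`, and the double-angle formula applied twice gives
`sin 2w = 4 u (1 - u²) / (1 + u²)²`. Since `u_xx = 5 u`, `u_yy = u (1 - 2 / cosh² y)`, and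
`cosh² = 1 + sinh²`, the difference `w_xx - w_yy` collapses to `2 (5 - 1) u (1 - u²) / (1 + u²)²`,
which is `2 sin 2w`.
-/

open Real

theorem sin_two_mul_two_mul_arctan (u : ℝ) :
    sin (2 * (2 * arctan u)) = 4 * u * (1 - u ^ 2) / (1 + u ^ 2) ^ 2 := by
  have hsin : sin (arctan u) = u * cos (arctan u) := by
    rw [sin_arctan, cos_arctan, mul_one_div]
  calc sin (2 * (2 * arctan u))
      = 4 * u * cos (arctan u) ^ 2 * (2 * cos (arctan u) ^ 2 - 1) := by
        rw [sin_two_mul, sin_two_mul, cos_two_mul, hsin]; ring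
    _ = 4 * u * (1 - u ^ 2) / (1 + u ^ 2) ^ 2 := by
        rw [cos_sq_arctan]; field_simp; ring

theorem deriv_deriv_two_mul_arctan_comp {u u' : ℝ → ℝ} {u'' t : ℝ}
    (hu : ∀ s, HasDerivAt u (u' s) s) (hu' : HasDerivAt u' u'' t) :
    deriv (deriv fun s => 2 * arctan (u s)) t =
      2 * u'' / (1 + u t ^ 2) - 4 * u t * u' t ^ 2 / (1 + u t ^ 2) ^ 2 := by
  have hfirst : deriv (fun s => 2 * arctan (u s)) = fun s => 2 * (u' s / (1 + u s ^ 2)) :=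
    funext fun s => by rw [((hu s).arctan.const_mul 2).deriv, one_div_mul_eq_div]
  have hden : HasDerivAt (fun s => 1 + u s ^ 2) (2 * u t * u' t) t := by
    simpa using ((hu t).pow 2).const_add 1
  rw [hfirst, ((hu'.fun_div hden (by positivity)).const_mul 2).deriv]
  field_simp
  ring

theorem hasDerivAt_sinh_mul_div (a k t : ℝ) :
    HasDerivAt (fun x => sinh (a * x) / k) (a * cosh (a * t) / k) t :=
  ((((hasDerivAt_id' t).const_mul a).sinh).div_const k).congr_deriv (by ring)

theorem hasDerivAt_mul_cosh_mul_div (a k t : ℝ) :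
    HasDerivAt (fun x => a * cosh (a * x) / k) (a ^ 2 * sinh (a * t) / k) t :=
  (((((hasDerivAt_id' t).const_mul a).cosh).const_mul a).div_const k).congr_deriv (by ring)

theorem hasDerivAt_div_cosh (b t : ℝ) :
    HasDerivAt (fun y => b / cosh y) (-b * sinh t / cosh t ^ 2) t :=
  ((hasDerivAt_const t b).fun_div (hasDerivAt_cosh t) (cosh_pos t).ne').congr_deriv (by ring)

theorem hasDerivAt_neg_mul_sinh_div_cosh_sq (b t : ℝ) :
    HasDerivAt (fun y => -b * sinh y / cosh y ^ 2) (b * (cosh t ^ 2 - 2) / cosh t ^ 3) t := by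
  refine (((hasDerivAt_sinh t).const_mul (-b)).fun_div ((hasDerivAt_cosh t).fun_pow 2)
    (pow_ne_zero 2 (cosh_pos t).ne')).congr_deriv ?_
  have hc := (cosh_pos t).ne'
  field_simp
  push_cast
  linear_combination (2 * b * cosh t) * sinh_sq t

theorem stmt_5 :
    let w : ℝ → ℝ → ℝ := fun x y =>
      2 * Real.arctan (Real.sinh (Real.sqrt 5 * x) / (Real.sqrt 5 * Real.cosh y))
    ∀ x y : ℝ,
      deriv (deriv (fun x' => w x' y)) x - deriv (deriv (fun y' => w x y')) y
        = 2 * Real.sin (2 * w x y) := by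
  intro w x y
  have hw_y : (fun y' => w x y') = fun y' => 2 * arctan (sinh (√5 * x) / √5 / cosh y') :=
    funext fun _ => by simp only [w, div_div]
  rw [hw_y,
    deriv_deriv_two_mul_arctan_comp (hasDerivAt_div_cosh _)
      (hasDerivAt_neg_mul_sinh_div_cosh_sq _ y),
    deriv_deriv_two_mul_arctan_comp (hasDerivAt_sinh_mul_div √5 (√5 * cosh y))
      (hasDerivAt_mul_cosh_mul_div _ _ x)]
  simp only [w, sin_two_mul_two_mul_arctan]
  have h5 : √5 ^ 2 = 5 := sq_sqrt (by norm_num)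
  have hc : cosh y ≠ 0 := (cosh_pos y).ne'
  field_simp
  rw [cosh_sq (√5 * x), sinh_sq y]
  linear_combination
    (2 * sinh (√5 * x) * √5 ^ 2 * cosh y ^ 4 - 2 * sinh (√5 * x) ^ 3 * cosh y ^ 2) * h5
end

section
/- Let α, β, γ ∈ ℝ with α² - β² = 4, and suppose |exp(αx + βy + γ)| < 1 on a region U. Then w(x,y) = 2·arctanh(exp(αx + βy + γ)) satisfies the hyperbolic sinh-Gordon equation w_xx - w_yy = 2·sinh(2w) on U. -/
open Real Filter Topology

/-!
The solution is a travelling wave `w = F (α x + β y + γ)` with profile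
`F u = log ((1 + eᵘ) / (1 - eᵘ)) = 2 artanh eᵘ`, so `w_xx - w_yy = (α² - β²) F'' = 4 F''`.
With `e = eᵘ` one computes `F'' = 2e(1 + e²)/(1 - e²)²`, while `e^{±2F} = ((1 ± e)/(1 ∓ e))²`
gives `sinh (2F) = 4e(1 + e²)/(1 - e²)²`; hence `4 F'' = 2 sinh (2F)`.
-/

theorem deriv_comp_mul_add (g : ℝ → ℝ) (a c x : ℝ) :
    deriv (fun s => g (a * s + c)) x = a * deriv g (a * x + c) := by
  rw [deriv_comp_mul_left a (fun t => g (t + c)) x, deriv_comp_add_const, smul_eq_mul]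

theorem deriv_deriv_comp_mul_add (g : ℝ → ℝ) (a c x : ℝ) :
    deriv (deriv fun s => g (a * s + c)) x = a ^ 2 * deriv (deriv g) (a * x + c) := by
  simp only [funext (deriv_comp_mul_add g a c), deriv_const_mul_field', deriv_comp_mul_add]
  ring

noncomputable def solitonProfile (u : ℝ) : ℝ := log ((1 + exp u) / (1 - exp u))

theorem solitonProfile_eventuallyEq {u : ℝ} (hu : u < 0) :
    solitonProfile =ᶠ[𝓝 u] fun v => log (1 + exp v) - log (1 - exp v) := by
  filter_upwards [Iio_mem_nhds hu] with v hv
  have : 0 < 1 - exp v := sub_pos.2 (exp_lt_one_iff.2 hv)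
  exact log_div (by positivity) this.ne'

theorem hasDerivAt_solitonProfile {u : ℝ} (hu : u < 0) :
    HasDerivAt solitonProfile (2 * exp u / (1 - exp u ^ 2)) u := by
  have hsub : 0 < 1 - exp u := sub_pos.2 (exp_lt_one_iff.2 hu)
  have hadd : 0 < 1 + exp u := by positivity
  have hplus := ((hasDerivAt_exp u).const_add 1).log hadd.ne'
  have hminus := ((hasDerivAt_exp u).const_sub 1).log hsub.ne'
  have hden : 1 - exp u ^ 2 ≠ 0 := by nlinarith [exp_pos u]
  refine ((hplus.sub hminus).congr_of_eventuallyEq (solitonProfile_eventuallyEq hu)).congr_deriv ?_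
  field_simp
  ring

theorem deriv_deriv_solitonProfile {u : ℝ} (hu : u < 0) :
    deriv (deriv solitonProfile) u = 2 * exp u * (1 + exp u ^ 2) / (1 - exp u ^ 2) ^ 2 := by
  have hderiv : deriv solitonProfile =ᶠ[𝓝 u] fun v => 2 * exp v / (1 - exp v ^ 2) := by
    filter_upwards [Iio_mem_nhds hu] with v hv
    exact (hasDerivAt_solitonProfile hv).deriv
  have hden : 1 - exp u ^ 2 ≠ 0 := by nlinarith [exp_pos u, exp_lt_one_iff.2 hu]
  rw [hderiv.deriv_eq]
  have := ((hasDerivAt_exp u).const_mul 2).fun_div (((hasDerivAt_exp u).fun_pow 2).const_sub 1) hden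
  rw [this.deriv]
  field_simp
  ring

theorem sinh_two_mul_log_div {e : ℝ} (he : |e| < 1) :
    sinh (2 * log ((1 + e) / (1 - e))) = 4 * e * (1 + e ^ 2) / (1 - e ^ 2) ^ 2 := by
  obtain ⟨hlo, hhi⟩ := abs_lt.1 he
  have hsub : 0 < 1 - e := by linarith
  have hadd : 0 < 1 + e := by linarith
  have hexp : exp (2 * log ((1 + e) / (1 - e))) = ((1 + e) / (1 - e)) ^ 2 := by
    rw [two_mul, exp_add, exp_log (by positivity), sq]
  have hden : 1 - e ^ 2 ≠ 0 := by nlinarith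
  rw [sinh_eq, exp_neg, hexp]
  field_simp
  ring

theorem stmt_13_general (α β γ : ℝ) (h : α ^ 2 - β ^ 2 = 4)
    (U : Set (ℝ × ℝ))
    (hlt : ∀ p ∈ U, |Real.exp (α * p.1 + β * p.2 + γ)| < 1) :
    let w : ℝ → ℝ → ℝ := fun x y =>
      Real.log ((1 + Real.exp (α * x + β * y + γ)) / (1 - Real.exp (α * x + β * y + γ)))
    ∀ x y : ℝ, (x, y) ∈ U →
      deriv (deriv (fun x' => w x' y)) x - deriv (deriv (fun y' => w x y')) y
        = 2 * Real.sinh (2 * w x y) := by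
  intro w x y hxy
  set u := α * x + β * y + γ
  have hE : |exp u| < 1 := hlt (x, y) hxy
  have hu : u < 0 := exp_lt_one_iff.1 (abs_lt.1 hE).2
  have hx : (fun x' => w x' y) = fun x' => solitonProfile (α * x' + (β * y + γ)) := by
    funext x'; simp only [w, solitonProfile, add_assoc]
  have hy : (fun y' => w x y') = fun y' => solitonProfile (β * y' + (α * x + γ)) := by
    funext y'; simp only [w, solitonProfile]; ring_nf
  rw [hx, hy, deriv_deriv_comp_mul_add, deriv_deriv_comp_mul_add,
    show α * x + (β * y + γ) = u by ring, show β * y + (α * x + γ) = u by ring,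
    ← sub_mul, h, deriv_deriv_solitonProfile hu]
  show _ = 2 * sinh (2 * log ((1 + exp u) / (1 - exp u)))
  rw [sinh_two_mul_log_div hE]
  ring

theorem stmt_13 (α β γ : ℝ) (h : α ^ 2 - β ^ 2 = 4)
    (U : Set (ℝ × ℝ)) (hU : IsOpen U)
    (hlt : ∀ p ∈ U, |Real.exp (α * p.1 + β * p.2 + γ)| < 1) :
    let w : ℝ → ℝ → ℝ := fun x y =>
      Real.log ((1 + Real.exp (α * x + β * y + γ)) / (1 - Real.exp (α * x + β * y + γ)))
    ∀ x y : ℝ, (x, y) ∈ U →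
      deriv (deriv (fun x' => w x' y)) x - deriv (deriv (fun y' => w x y')) y
        = 2 * Real.sinh (2 * w x y) :=
  stmt_13_general α β γ h U hlt
end

section
/- Let η₁ = α₁x + β₁y + γ₁ and η₂ = α₂x + β₂y + γ₂ with αᵢ² - βᵢ² = 4 (i = 1,2), set A = -(4 - α₁α₂ + β₁β₂)/(4 + α₁α₂ - β₁β₂) (assume denominator nonzero), F = exp(η₁) + exp(η₂) and G = 1 + A·exp(η₁ + η₂). Then the bilinear equations (D_x² - D_y² - 4)(F·G) = 0 and (D_x² - D_y²)(F·F + G·G) = 0 hold identically. -/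
/-!
F and G are superpositions of plane waves `exp (a x + b y)`. Since the Hirota operators are
bilinear and `D_x² (exp θ · exp θ') = (a - a')² exp (θ + θ')`, each bilinear expression becomes a
sum over pairs of waves, weighted by the dispersion polynomial evaluated at the difference of
their wave numbers. In `(D_x² - D_y² - 4)(F · G)` every such difference is `±(αᵢ, βᵢ)`, so every
weight vanishes by `αᵢ² - βᵢ² = 4`. In `(D_x² - D_y²)(F · F + G · G)` only the two cross terms
survive, both proportional to `exp (η₁ + η₂)`, and `A` is exactly the factor that makes them cancel.
-/

/-- Hirota operator `D_x²` for functions of two real variables. -/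
noncomputable def Dx2 (f g : ℝ → ℝ → ℝ) : ℝ → ℝ → ℝ := fun x y =>
  deriv (deriv (fun x' => f x' y)) x * g x y
    - 2 * deriv (fun x' => f x' y) x * deriv (fun x' => g x' y) x
    + f x y * deriv (deriv (fun x' => g x' y)) x

/-- Hirota operator `D_y²` for functions of two real variables. -/
noncomputable def Dy2 (f g : ℝ → ℝ → ℝ) : ℝ → ℝ → ℝ := fun x y =>
  deriv (deriv (fun y' => f x y')) y * g x y
    - 2 * deriv (fun y' => f x y') y * deriv (fun y' => g x y') y
    + f x y * deriv (deriv (fun y' => g x y')) y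

open Real

section ExpSum

variable {ι : Type*} [Fintype ι]

lemma deriv_sum_mul_exp (c a k : ι → ℝ) :
    deriv (fun t => ∑ i, c i * exp (a i * t + k i)) =
      fun t => ∑ i, c i * a i * exp (a i * t + k i) := by
  funext t
  refine (HasDerivAt.fun_sum fun i _ => ?_).deriv
  simpa [mul_assoc, mul_comm] using
    ((((hasDerivAt_id t).const_mul (a i)).add_const (k i)).exp).const_mul (c i)

noncomputable def expSum (c a b : ι → ℝ) : ℝ → ℝ → ℝ :=
  fun x y => ∑ i, c i * exp (a i * x + b i * y)

lemma expSum_swap (c a b : ι → ℝ) : (fun u v => expSum c a b v u) = expSum c b a := by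
  funext u v
  simp only [expSum, add_comm]

variable {ι' : Type*} [Fintype ι']

lemma Dx2_expSum (c a b : ι → ℝ) (d a' b' : ι' → ℝ) (x y : ℝ) :
    Dx2 (expSum c a b) (expSum d a' b') x y =
      ∑ i, ∑ j, c i * d j * (a i - a' j) ^ 2 *
        (exp (a i * x + b i * y) * exp (a' j * x + b' j * y)) := by
  simp only [Dx2, expSum, deriv_sum_mul_exp]
  rw [mul_assoc, Finset.sum_mul_sum, Finset.sum_mul_sum, Finset.sum_mul_sum]
  simp only [Finset.mul_sum, ← Finset.sum_sub_distrib, ← Finset.sum_add_distrib]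
  refine Finset.sum_congr rfl fun i _ => Finset.sum_congr rfl fun j _ => ?_
  ring

lemma Dy2_expSum (c a b : ι → ℝ) (d a' b' : ι' → ℝ) (x y : ℝ) :
    Dy2 (expSum c a b) (expSum d a' b') x y =
      ∑ i, ∑ j, c i * d j * (b i - b' j) ^ 2 *
        (exp (a i * x + b i * y) * exp (a' j * x + b' j * y)) := by
  -- `D_y²` is `D_x²` with the two variables exchanged.
  change Dx2 (fun u v => expSum c a b v u) (fun u v => expSum d a' b' v u) y x = _
  simp only [expSum_swap, Dx2_expSum, add_comm]

lemma Dx2_sub_Dy2_sub_mul_expSum (k : ℝ) (c a b : ι → ℝ) (d a' b' : ι' → ℝ) (x y : ℝ) :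
    Dx2 (expSum c a b) (expSum d a' b') x y - Dy2 (expSum c a b) (expSum d a' b') x y
        - k * expSum c a b x y * expSum d a' b' x y =
      ∑ i, ∑ j, c i * d j * ((a i - a' j) ^ 2 - (b i - b' j) ^ 2 - k) *
        (exp (a i * x + b i * y) * exp (a' j * x + b' j * y)) := by
  rw [Dx2_expSum, Dy2_expSum, mul_assoc, expSum, expSum, Finset.sum_mul_sum, Finset.mul_sum,
    ← Finset.sum_sub_distrib, ← Finset.sum_sub_distrib]
  refine Finset.sum_congr rfl fun i _ => ?_
  rw [Finset.mul_sum, ← Finset.sum_sub_distrib, ← Finset.sum_sub_distrib]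
  refine Finset.sum_congr rfl fun j _ => ?_
  ring

end ExpSum

theorem stmt_15 (α₁ β₁ γ₁ α₂ β₂ γ₂ : ℝ)
    (h1 : α₁ ^ 2 - β₁ ^ 2 = 4) (h2 : α₂ ^ 2 - β₂ ^ 2 = 4)
    (hden : 4 + α₁ * α₂ - β₁ * β₂ ≠ 0)
    (A : ℝ) (hA : A = -(4 - α₁ * α₂ + β₁ * β₂) / (4 + α₁ * α₂ - β₁ * β₂)) :
    let η₁ : ℝ → ℝ → ℝ := fun x y => α₁ * x + β₁ * y + γ₁
    let η₂ : ℝ → ℝ → ℝ := fun x y => α₂ * x + β₂ * y + γ₂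
    let F : ℝ → ℝ → ℝ := fun x y => Real.exp (η₁ x y) + Real.exp (η₂ x y)
    let G : ℝ → ℝ → ℝ := fun x y => 1 + A * Real.exp (η₁ x y + η₂ x y)
    (∀ x y, Dx2 F G x y - Dy2 F G x y - 4 * F x y * G x y = 0) ∧
    (∀ x y, (Dx2 F F x y + Dx2 G G x y) - (Dy2 F F x y + Dy2 G G x y) = 0) := by
  intro η₁ η₂ F G
  have hF : F = expSum ![exp γ₁, exp γ₂] ![α₁, α₂] ![β₁, β₂] := by
    funext x y
    simp only [F, η₁, η₂, expSum, Fin.sum_univ_two, Matrix.cons_val_zero, Matrix.cons_val_one,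
      Matrix.cons_val_fin_one, exp_add]
    ring
  have hG : G = expSum ![1, A * exp (γ₁ + γ₂)] ![0, α₁ + α₂] ![0, β₁ + β₂] := by
    funext x y
    simp only [G, η₁, η₂, expSum, Fin.sum_univ_two, Matrix.cons_val_zero, Matrix.cons_val_one,
      Matrix.cons_val_fin_one, zero_mul, exp_zero, add_mul, exp_add]
    ring
  have hAD : A * (4 + α₁ * α₂ - β₁ * β₂) = -(4 - α₁ * α₂ + β₁ * β₂) := by
    rw [hA]; field_simp
  have hdisp : ∀ i j, (![α₁, α₂] i - ![0, α₁ + α₂] j) ^ 2 - (![β₁, β₂] i - ![0, β₁ + β₂] j) ^ 2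
      - 4 = 0 := by
    simp only [Fin.forall_fin_two, Matrix.cons_val_zero, Matrix.cons_val_one, Matrix.cons_val_fin_one]
    exact ⟨⟨by linear_combination h1, by linear_combination h2⟩,
      by linear_combination h2, by linear_combination h1⟩
  rw [hF, hG]
  refine ⟨fun x y => ?_, fun x y => ?_⟩
  · rw [Dx2_sub_Dy2_sub_mul_expSum]
    simp [hdisp]
  · simp only [Dx2_expSum, Dy2_expSum, Fin.sum_univ_two, Matrix.cons_val_zero, Matrix.cons_val_one, add_mul, zero_mul, exp_add, exp_zero]
    linear_combination 2 * exp γ₁ * exp γ₂ * exp (α₁ * x) * exp (β₁ * y) * exp (α₂ * x) *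
      exp (β₂ * y) * ((1 + A) * (h1 + h2) + 2 * hAD)
end

section
/- Let F, G: ℝ² → ℝ be smooth with G² - F² > 0, and suppose (D_x² - D_y² - 4)(F·G) = 0 and (D_x² - D_y²)(F·F + G·G) = 0. Then w = 2·arctanh(F/G) satisfies the hyperbolic sinh-Gordon equation w_xx - w_yy = 2·sinh(2w). -/
lemma one_le_inf : ((⊤ : ℕ∞) : WithTop ℕ∞) ≠ 0 := by
  simp

lemma deriv_of_add (f g : ℝ → ℝ) (hf : ContDiff ℝ (⊤ : ℕ∞) f) (hg : ContDiff ℝ (⊤ : ℕ∞) g) :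
    deriv (fun t => f t + g t) = fun t => deriv f t + deriv g t :=
  funext fun t => deriv_fun_add (hf.differentiable one_le_inf t) (hg.differentiable one_le_inf t)

lemma deriv_of_sub (f g : ℝ → ℝ) (hf : ContDiff ℝ (⊤ : ℕ∞) f) (hg : ContDiff ℝ (⊤ : ℕ∞) g) :
    deriv (fun t => f t - g t) = fun t => deriv f t - deriv g t :=
  funext fun t => deriv_fun_sub (hf.differentiable one_le_inf t) (hg.differentiable one_le_inf t)

lemma deriv2_of_add (f g : ℝ → ℝ) (hf : ContDiff ℝ (⊤ : ℕ∞) f) (hg : ContDiff ℝ (⊤ : ℕ∞) g)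
    (x : ℝ) :
    deriv (deriv (fun t => f t + g t)) x = deriv (deriv f) x + deriv (deriv g) x := by
  rw [deriv_of_add f g hf hg]
  exact deriv_fun_add ((contDiff_infty_iff_deriv.mp hf).2.differentiable one_le_inf x)
    ((contDiff_infty_iff_deriv.mp hg).2.differentiable one_le_inf x)

lemma deriv2_of_sub (f g : ℝ → ℝ) (hf : ContDiff ℝ (⊤ : ℕ∞) f) (hg : ContDiff ℝ (⊤ : ℕ∞) g)
    (x : ℝ) :
    deriv (deriv (fun t => f t - g t)) x = deriv (deriv f) x - deriv (deriv g) x := by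
  rw [deriv_of_sub f g hf hg]
  exact deriv_fun_sub ((contDiff_infty_iff_deriv.mp hf).2.differentiable one_le_inf x)
    ((contDiff_infty_iff_deriv.mp hg).2.differentiable one_le_inf x)

lemma second_deriv_log_div (a b : ℝ → ℝ) (ha : ContDiff ℝ (⊤ : ℕ∞) a)
    (hb : ContDiff ℝ (⊤ : ℕ∞) b) (h : ∀ t, a t * b t > 0) (x : ℝ) :
    deriv (deriv (fun t => Real.log (a t / b t))) x =
      (deriv (deriv a) x * a x - (deriv a x) ^ 2) / (a x) ^ 2
        - (deriv (deriv b) x * b x - (deriv b x) ^ 2) / (b x) ^ 2 := by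
  have hane : ∀ t, a t ≠ 0 := by
    intro t h0; have := h t; rw [h0] at this; simp at this
  have hbne : ∀ t, b t ≠ 0 := by
    intro t h0; have := h t; rw [h0] at this; simp at this
  have hd1 : deriv (fun t => Real.log (a t / b t))
      = fun t => deriv a t / a t - deriv b t / b t := by
    funext t
    have haD := (ha.differentiable one_le_inf t).hasDerivAt
    have hbD := (hb.differentiable one_le_inf t).hasDerivAt
    have hlog := (haD.div hbD (hbne t)).log (div_ne_zero (hane t) (hbne t))
    simp only [Pi.div_apply] at hlog
    rw [hlog.deriv]
    field_simp [hane t, hbne t]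
  rw [hd1]
  have ha' := (contDiff_infty_iff_deriv.mp ha).2
  have hb' := (contDiff_infty_iff_deriv.mp hb).2
  have d1 := ((ha'.differentiable one_le_inf x).hasDerivAt).div
    ((ha.differentiable one_le_inf x).hasDerivAt) (hane x)
  have d2 := ((hb'.differentiable one_le_inf x).hasDerivAt).div
    ((hb.differentiable one_le_inf x).hasDerivAt) (hbne x)
  rw [show (fun t => deriv a t / a t - deriv b t / b t) = deriv a / a - deriv b / b from rfl,
    (d1.sub d2).deriv]
  ring

lemma key_algebra (f g fx fy fxx fyy gx gy gxx gyy : ℝ)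
    (hu : g + f ≠ 0) (hv : g - f ≠ 0)
    (h1 : (fxx * g - 2 * fx * gx + f * gxx) - (fyy * g - 2 * fy * gy + f * gyy)
        - 4 * f * g = 0)
    (h2 : ((fxx * f - 2 * fx * fx + f * fxx) + (gxx * g - 2 * gx * gx + g * gxx))
        - ((fyy * f - 2 * fy * fy + f * fyy) + (gyy * g - 2 * gy * gy + g * gyy)) = 0) :
    ((gxx + fxx) * (g + f) - (gx + fx) ^ 2) / (g + f) ^ 2
      - ((gxx - fxx) * (g - f) - (gx - fx) ^ 2) / (g - f) ^ 2
      - (((gyy + fyy) * (g + f) - (gy + fy) ^ 2) / (g + f) ^ 2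
        - ((gyy - fyy) * (g - f) - (gy - fy) ^ 2) / (g - f) ^ 2)
      = ((g + f) / (g - f)) ^ 2 - (((g + f) / (g - f)) ^ 2)⁻¹ := by
  have hu2 : (g + f) ^ 2 ≠ 0 := pow_ne_zero 2 hu
  have hv2 : (g - f) ^ 2 ≠ 0 := pow_ne_zero 2 hv
  have hR : ((g + f) / (g - f)) ^ 2 - (((g + f) / (g - f)) ^ 2)⁻¹
      = ((g + f) ^ 4 - (g - f) ^ 4) / ((g + f) ^ 2 * (g - f) ^ 2) := by
    field_simp
  rw [hR, div_sub_div _ _ hu2 hv2, div_sub_div _ _ hu2 hv2, div_sub_div_same]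
  congr 1
  linear_combination ((g - f) ^ 2 + (g + f) ^ 2) * h1 + ((g - f) ^ 2 - (g + f) ^ 2) / 2 * h2

theorem stmt_16 (F G : ℝ → ℝ → ℝ)
    (hF : ContDiff ℝ (⊤ : ℕ∞) (fun p : ℝ × ℝ => F p.1 p.2))
    (hG : ContDiff ℝ (⊤ : ℕ∞) (fun p : ℝ × ℝ => G p.1 p.2))
    (hpos : ∀ x y, (G x y) ^ 2 - (F x y) ^ 2 > 0)
    (hbilin1 : ∀ x y, Dx2 F G x y - Dy2 F G x y - 4 * F x y * G x y = 0)
    (hbilin2 : ∀ x y,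
      (Dx2 F F x y + Dx2 G G x y) - (Dy2 F F x y + Dy2 G G x y) = 0) :
    let w : ℝ → ℝ → ℝ := fun x y => Real.log ((1 + F x y / G x y) / (1 - F x y / G x y))
    ∀ x y : ℝ,
      deriv (deriv (fun x' => w x' y)) x - deriv (deriv (fun y' => w x y')) y
        = 2 * Real.sinh (2 * w x y) := by
  have hF' : ContDiff ℝ ((⊤ : ℕ∞) : WithTop ℕ∞) (fun p : ℝ × ℝ => F p.1 p.2) :=
    hF.of_le (by simp)
  have hG' : ContDiff ℝ ((⊤ : ℕ∞) : WithTop ℕ∞) (fun p : ℝ × ℝ => G p.1 p.2) :=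
    hG.of_le (by simp)
  intro w x y
  have hFx : ∀ b : ℝ, ContDiff ℝ (⊤ : ℕ∞) (fun t : ℝ => F t b) :=
    fun b => hF'.comp (contDiff_id.prodMk contDiff_const)
  have hFy : ∀ a : ℝ, ContDiff ℝ (⊤ : ℕ∞) (fun t : ℝ => F a t) :=
    fun a => hF'.comp (contDiff_const.prodMk contDiff_id)
  have hGx : ∀ b : ℝ, ContDiff ℝ (⊤ : ℕ∞) (fun t : ℝ => G t b) :=
    fun b => hG'.comp (contDiff_id.prodMk contDiff_const)
  have hGy : ∀ a : ℝ, ContDiff ℝ (⊤ : ℕ∞) (fun t : ℝ => G a t) :=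
    fun a => hG'.comp (contDiff_const.prodMk contDiff_id)
  have hkey : ∀ a b : ℝ, (G a b + F a b) * (G a b - F a b) > 0 := by
    intro a b; nlinarith [hpos a b]
  have hGne : ∀ a b : ℝ, G a b ≠ 0 := by
    intro a b h0; have := hpos a b; rw [h0] at this; nlinarith [sq_nonneg (F a b)]
  have hvne : ∀ a b : ℝ, G a b - F a b ≠ 0 := by
    intro a b h0; have := hkey a b; rw [h0] at this; simp at this
  have hune : ∀ a b : ℝ, G a b + F a b ≠ 0 := by
    intro a b h0; have := hkey a b; rw [h0] at this; simp at this
  have hfun : ∀ a b : ℝ, (1 + F a b / G a b) / (1 - F a b / G a b)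
      = (G a b + F a b) / (G a b - F a b) := by
    intro a b
    rw [div_eq_div_iff]
    · field_simp [hGne a b]
    · intro h0
      apply hvne a b
      have : 1 - F a b / G a b = (G a b - F a b) / G a b := by
        rw [eq_div_iff (hGne a b), sub_mul, one_mul, div_mul_cancel₀ _ (hGne a b)]
      rw [this] at h0
      exact (div_eq_zero_iff.mp h0).resolve_right (hGne a b)
    · exact hvne a b
  show deriv (deriv (fun x' => Real.log ((1 + F x' y / G x' y) / (1 - F x' y / G x' y)))) x
      - deriv (deriv (fun y' => Real.log ((1 + F x y' / G x y') / (1 - F x y' / G x y')))) y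
      = 2 * Real.sinh (2 * Real.log ((1 + F x y / G x y) / (1 - F x y / G x y)))
  simp only [hfun]
  have e1 := second_deriv_log_div (fun t => G t y + F t y) (fun t => G t y - F t y)
    ((hGx y).add (hFx y)) ((hGx y).sub (hFx y)) (fun t => hkey t y) x
  have e2 := second_deriv_log_div (fun t => G x t + F x t) (fun t => G x t - F x t)
    ((hGy x).add (hFy x)) ((hGy x).sub (hFy x)) (fun t => hkey x t) y
  rw [e1, e2]
  -- derivative of sums/differences at the point
  have dGx := ((hGx y).differentiable one_le_inf x)
  have dFx := ((hFx y).differentiable one_le_inf x)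
  have dGy := ((hGy x).differentiable one_le_inf y)
  have dFy := ((hFy x).differentiable one_le_inf y)
  rw [deriv2_of_add _ _ (hGx y) (hFx y) x, deriv2_of_sub _ _ (hGx y) (hFx y) x,
      deriv2_of_add _ _ (hGy x) (hFy x) y, deriv2_of_sub _ _ (hGy x) (hFy x) y,
      deriv_fun_add dGx dFx, deriv_fun_sub dGx dFx, deriv_fun_add dGy dFy, deriv_fun_sub dGy dFy]
  -- sinh side
  have hr : 0 < (G x y + F x y) / (G x y - F x y) := by
    rcases mul_pos_iff.mp (hkey x y) with ⟨h1, h2⟩ | ⟨h1, h2⟩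
    · exact div_pos h1 h2
    · exact div_pos_of_neg_of_neg h1 h2
  have hsinh : 2 * Real.sinh (2 * Real.log ((G x y + F x y) / (G x y - F x y)))
      = ((G x y + F x y) / (G x y - F x y)) ^ 2
        - (((G x y + F x y) / (G x y - F x y)) ^ 2)⁻¹ := by
    rw [Real.sinh_eq,
      show (2:ℝ) * Real.log ((G x y + F x y) / (G x y - F x y))
        = Real.log ((G x y + F x y) / (G x y - F x y))
          + Real.log ((G x y + F x y) / (G x y - F x y)) by ring,
      Real.exp_neg, Real.exp_add, Real.exp_log hr]
    ring
  rw [hsinh]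
  -- unfold the bilinear hypotheses
  have hb1 := hbilin1 x y
  have hb2 := hbilin2 x y
  simp only [Dx2, Dy2] at hb1 hb2
  have := key_algebra (F x y) (G x y)
    (deriv (fun t => F t y) x) (deriv (fun t => F x t) y)
    (deriv (deriv (fun t => F t y)) x) (deriv (deriv (fun t => F x t)) y)
    (deriv (fun t => G t y) x) (deriv (fun t => G x t) y)
    (deriv (deriv (fun t => G t y)) x) (deriv (deriv (fun t => G x t)) y)
    (hune x y) (hvne x y) (by linarith [hb1]) (by linarith [hb2])
  linarith [this]
end
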